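/- arXiv:2212.01005 — 3 statements merged into one kernel-verified Lean document; each statement's English description precedes it below -/
import Mathlib

section
/- Let G be a finite DAG and let u, v be distinct nodes with |ts(u) - ts(v)| = 1. Consider the partition of V into the two-element block {u, v} and singleton blocks for all other nodes. Then the quotient graph (whose nodes are the blocks, with an edge from block A to block B iff A ≠ B and there exist a ∈ A, b ∈ B with (a,b) ∈ E) is acyclic. -/
variable {V : Type*}

/-- A directed path of length `k` (number of edges) from `u` to `v` in the digraph `E`. -/
def IsPathOfLength (E : V → V → Prop) (u v : V) (k : ℕ) : Prop :=
  ∃ f : Fin (k + 1) → V, f 0 = u ∧ f (Fin.last k) = v ∧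
    ∀ i : Fin k, E (f i.castSucc) (f i.succ)

/-- A directed graph (relation) is acyclic: no nontrivial directed cycle. -/
def Acyclic (E : V → V → Prop) : Prop := ∀ v, ¬ Relation.TransGen E v v

/-- `ts` is the topological-stage function of `E`: `ts v` is the length of the
longest directed path in `E` ending at `v`. -/
def IsTopStage (E : V → V → Prop) (ts : V → ℕ) : Prop :=
  ∀ v, IsGreatest {k | ∃ u, IsPathOfLength E u v k} (ts v)

/-- The quotient graph of a partition `P`: an edge from block A to block B iff
A ≠ B and some element of A has an E-edge to some element of B. -/
def QuotRel (E : V → V → Prop) (P : Set (Set V)) (A B : Set V) : Prop :=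
  A ∈ P ∧ B ∈ P ∧ A ≠ B ∧ ∃ a ∈ A, ∃ b ∈ B, E a b

/-- The partition consisting of the block {u, v} and singleton blocks for all
other nodes. -/
def MergePartition (u v : V) : Set (Set V) :=
  {S | S = {u, v} ∨ ∃ x : V, x ≠ u ∧ x ≠ v ∧ S = {x}}

theorem edge_ts_lt {E : V → V → Prop} {ts : V → ℕ} (hts : IsTopStage E ts)
    {a b : V} (hab : E a b) : ts a < ts b := by
  obtain ⟨w, f, h0, hlast, hedge⟩ := (hts a).1
  have hmem : IsPathOfLength E w b (ts a + 1) := by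
    refine ⟨fun j => if h : (j : ℕ) < ts a + 1 then f ⟨j, h⟩ else b, ?_, ?_, ?_⟩
    · have h0' : ((0 : Fin (ts a + 1 + 1)) : ℕ) < ts a + 1 := by simp
      simpa [h0'] using h0
    · simp [Fin.last]
    · intro i
      by_cases h : (i : ℕ) < ts a
      · have h1 : ((i.castSucc : Fin (ts a + 2)) : ℕ) < ts a + 1 := by
          simp only [Fin.coe_castSucc]; omega
        have h2 : ((i.succ : Fin (ts a + 2)) : ℕ) < ts a + 1 := by
          simp only [Fin.val_succ]; omega
        simp only [h1, h2, dif_pos]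
        have := hedge ⟨i, h⟩
        convert this using 2 <;> ext <;> simp [Fin.castSucc, Fin.succ]
      · have hi : (i : ℕ) = ts a := by omega
        have h1 : ((i.castSucc : Fin (ts a + 2)) : ℕ) < ts a + 1 := by
          simp only [Fin.coe_castSucc]; omega
        have h2 : ¬ ((i.succ : Fin (ts a + 2)) : ℕ) < ts a + 1 := by
          simp only [Fin.val_succ]; omega
        simp only [h1, h2, dif_pos, dif_neg, not_false_iff]
        have : (⟨(i.castSucc : Fin (ts a + 2)).val, h1⟩ : Fin (ts a + 1)) = Fin.last (ts a) := by
          ext; simp [Fin.castSucc, Fin.last, hi]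
        rw [this, hlast]
        exact hab
  have := (hts b).2 ⟨w, hmem⟩
  omega

open Classical in
/-- A rank function on blocks. -/
noncomputable def blockRank (ts : V → ℕ) (u v : V) (S : Set V) : ℤ :=
  if h : ∃ x, x ≠ u ∧ x ≠ v ∧ S = {x} then 2 * ts h.choose
  else 2 * min (ts u) (ts v) + 1

theorem blockRank_singleton (ts : V → ℕ) {u v x : V} (hxu : x ≠ u) (hxv : x ≠ v) :
    blockRank ts u v {x} = 2 * ts x := by
  have h : ∃ y, y ≠ u ∧ y ≠ v ∧ ({x} : Set V) = {y} := ⟨x, hxu, hxv, rfl⟩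
  rw [blockRank, dif_pos h]
  have := h.choose_spec.2.2
  rw [Set.singleton_eq_singleton_iff] at this
  rw [← this]

theorem blockRank_pair (ts : V → ℕ) {u v : V} (huv : u ≠ v) :
    blockRank ts u v {u, v} = 2 * min (ts u) (ts v) + 1 := by
  rw [blockRank, dif_neg]
  rintro ⟨x, hxu, hxv, hx⟩
  apply hxu
  have : u ∈ ({x} : Set V) := hx ▸ (by simp : u ∈ ({u, v} : Set V))
  simpa using this.symm

/-- Merging two distinct nodes whose topological stages differ by exactly one
(keeping all other nodes as singleton blocks) yields an acyclic quotient graph. -/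
theorem merge_stage_diff_one_quot_acyclic [Fintype V] (E : V → V → Prop)
    (hacyc : Acyclic E) (ts : V → ℕ) (hts : IsTopStage E ts) (u v : V)
    (huv : u ≠ v) (hdiff : |(ts u : ℤ) - (ts v : ℤ)| = 1) :
    ∀ A : Set V, ¬ Relation.TransGen (QuotRel E (MergePartition u v)) A A := by
  have hminmax : max (ts u) (ts v) = min (ts u) (ts v) + 1 := by
    rcases (abs_eq (by norm_num : (0:ℤ) ≤ 1)).mp hdiff with h | h <;> omega
  have step : ∀ A B, QuotRel E (MergePartition u v) A B →
      blockRank ts u v A < blockRank ts u v B := by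
    rintro A B ⟨hA, hB, hAB, a, ha, b, hb, hab⟩
    have hlt := edge_ts_lt hts hab
    rcases hA with hA | ⟨x, hxu, hxv, hx⟩ <;>
      rcases hB with hB | ⟨y, hyu, hyv, hy⟩
    · exact absurd (hA.trans hB.symm) hAB
    · -- A = {u,v}, B = {y}
      subst hA; subst hy
      rw [blockRank_pair ts huv, blockRank_singleton ts hyu hyv]
      have hb' : b = y := hb
      rcases ha with ha | ha <;> subst ha <;> subst hb' <;> omega
    · -- A = {x}, B = {u,v}
      subst hx; subst hB
      rw [blockRank_pair ts huv, blockRank_singleton ts hxu hxv]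
      have ha' : a = x := ha
      rcases hb with hb | hb <;> subst hb <;> subst ha' <;> omega
    · -- A = {x}, B = {y}
      subst hx; subst hy
      rw [blockRank_singleton ts hxu hxv, blockRank_singleton ts hyu hyv]
      have ha' : a = x := ha
      have hb' : b = y := hb
      subst ha'; subst hb'; omega
  have key : ∀ A B, Relation.TransGen (QuotRel E (MergePartition u v)) A B →
      blockRank ts u v A < blockRank ts u v B := by
    intro A B h
    induction h with
    | single h => exact step _ _ h
    | tail _ h ih => exact ih.trans (step _ _ h)
  intro A hA
  exact absurd (key A A hA) (lt_irrefl _)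
end

section
/- Let G be a finite DAG and suppose u, v are distinct nodes such that merging u and v (keeping all other nodes as singletons) creates a cycle in the quotient graph. Then there exists a node p distinct from u and v and a directed path from u through p to v, or from v through p to u; in particular |ts(u) - ts(v)| ≥ 2. Consequently, if |ts(u) - ts(v)| = 1 then merging u and v cannot create a cycle. -/
variable {V : Type*}

/-- Appending an edge to a path. -/
lemma path_snoc (E : V → V → Prop) {w x y : V} {k : ℕ}
    (h : IsPathOfLength E w x k) (hxy : E x y) : IsPathOfLength E w y (k + 1) := by
  obtain ⟨f, h0, hl, he⟩ := h
  refine ⟨Fin.snoc f y, ?_, ?_, ?_⟩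
  · rw [show (0 : Fin (k+1+1)) = Fin.castSucc 0 by simp, Fin.snoc_castSucc, h0]
  · simp
  · intro i
    refine Fin.lastCases ?_ ?_ i
    · rw [Fin.succ_last, Fin.snoc_last, Fin.snoc_castSucc, hl]; exact hxy
    · intro j
      rw [Fin.succ_castSucc, Fin.snoc_castSucc, Fin.snoc_castSucc]
      exact he j

/-- The topological stage is strictly increasing along edges. -/
lemma ts_lt_of_edge {E : V → V → Prop} {ts : V → ℕ} (hts : IsTopStage E ts)
    {x y : V} (h : E x y) : ts x < ts y := by
  obtain ⟨w, hw⟩ := (hts x).1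
  have hmem : ts x + 1 ∈ {k | ∃ u, IsPathOfLength E u y k} := ⟨w, path_snoc E hw h⟩
  have := (hts y).2 hmem
  omega

/-- The topological stage is strictly increasing along directed paths. -/
lemma ts_lt_of_transGen {E : V → V → Prop} {ts : V → ℕ} (hts : IsTopStage E ts)
    {x y : V} (h : Relation.TransGen E x y) : ts x < ts y := by
  induction h with
  | single h => exact ts_lt_of_edge hts h
  | tail _ h ih => exact lt_trans ih (ts_lt_of_edge hts h)

/-- The goal: an intermediate node between `u` and `v`. -/
def Goal' (E : V → V → Prop) (u v : V) : Prop :=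
  ∃ p : V, p ≠ u ∧ p ≠ v ∧
    ((Relation.TransGen E u p ∧ Relation.TransGen E p v) ∨
     (Relation.TransGen E v p ∧ Relation.TransGen E p u))

/-- Invariant describing what a quotient path from block `A` to block `B` yields. -/
def Inv' (E : V → V → Prop) (u v : V) (A B : Set V) : Prop :=
  Goal' E u v ∨
  (∃ x y : V, A = {x} ∧ B = {y} ∧ x ≠ u ∧ x ≠ v ∧ y ≠ u ∧ y ≠ v ∧
     Relation.TransGen E x y) ∨
  (∃ x : V, A = {x} ∧ x ≠ u ∧ x ≠ v ∧ B = {u, v} ∧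
     ∃ m, (m = u ∨ m = v) ∧ Relation.TransGen E x m) ∨
  (∃ x y : V, A = {x} ∧ B = {y} ∧ x ≠ u ∧ x ≠ v ∧ y ≠ u ∧ y ≠ v ∧
     (∃ m, (m = u ∨ m = v) ∧ Relation.TransGen E x m) ∧
     (∃ m' p, (m' = u ∨ m' = v) ∧ p ≠ u ∧ p ≠ v ∧ E m' p ∧ Relation.ReflTransGen E p y)) ∨
  (A = {u, v} ∧ ∃ y : V, B = {y} ∧ y ≠ u ∧ y ≠ v ∧
     ∃ m p, (m = u ∨ m = v) ∧ p ≠ u ∧ p ≠ v ∧ E m p ∧ Relation.ReflTransGen E p y)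

lemma goal_of' {E : V → V → Prop} {u v : V} (hacyc : Acyclic E) {m m' p : V}
    (hm : m = u ∨ m = v) (hm' : m' = u ∨ m' = v) (hp1 : p ≠ u) (hp2 : p ≠ v)
    (h1 : Relation.TransGen E m p) (h2 : Relation.TransGen E p m') :
    Goal' E u v := by
  rcases hm with rfl | rfl <;> rcases hm' with rfl | rfl
  · exact absurd (h1.trans h2) (hacyc _)
  · exact ⟨p, hp1, hp2, Or.inl ⟨h1, h2⟩⟩
  · exact ⟨p, hp1, hp2, Or.inr ⟨h1, h2⟩⟩
  · exact absurd (h1.trans h2) (hacyc _)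

lemma mem_merge_block {u v : V} {A : Set V} (h : A ∈ MergePartition u v) :
    A = {u, v} ∨ ∃ x : V, x ≠ u ∧ x ≠ v ∧ A = {x} := h

lemma inv_of_transGen {E : V → V → Prop} {u v : V} (hacyc : Acyclic E)
    {A B : Set V}
    (h : Relation.TransGen (QuotRel E (MergePartition u v)) A B) :
    Inv' E u v A B := by
  induction h with
  | single h =>
    obtain ⟨hA, hB, hne, a, ha, b, hb, hab⟩ := h
    rcases mem_merge_block hA with rfl | ⟨x, hx1, hx2, rfl⟩ <;>
      rcases mem_merge_block hB with hBM | ⟨y, hy1, hy2, hBy⟩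
    · exact absurd hBM.symm hne
    · subst hBy
      have hb' : b = y := hb
      subst hb'
      rcases (Set.mem_insert_iff.mp ha) with rfl | ha'
      · exact Or.inr (Or.inr (Or.inr (Or.inr ⟨rfl, b, rfl, hy1, hy2, a, b, Or.inl rfl,
          hy1, hy2, hab, Relation.ReflTransGen.refl⟩)))
      · have : a = v := ha'
        subst this
        exact Or.inr (Or.inr (Or.inr (Or.inr ⟨rfl, b, rfl, hy1, hy2, a, b, Or.inr rfl,
          hy1, hy2, hab, Relation.ReflTransGen.refl⟩)))
    · subst hBM
      have ha' : a = x := ha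
      subst ha'
      rcases (Set.mem_insert_iff.mp hb) with rfl | hb'
      · exact Or.inr (Or.inr (Or.inl ⟨a, rfl, hx1, hx2, rfl, b, Or.inl rfl,
          Relation.TransGen.single hab⟩))
      · have : b = v := hb'
        subst this
        exact Or.inr (Or.inr (Or.inl ⟨a, rfl, hx1, hx2, rfl, b, Or.inr rfl,
          Relation.TransGen.single hab⟩))
    · subst hBy
      have ha' : a = x := ha
      have hb' : b = y := hb
      subst ha'; subst hb'
      exact Or.inr (Or.inl ⟨a, b, rfl, rfl, hx1, hx2, hy1, hy2,
        Relation.TransGen.single hab⟩)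
  | tail _ h2 ih =>
    obtain ⟨hB, hC, hne, b, hb, c, hc, hbc⟩ := h2
    rcases ih with g | ⟨x, y, hAx, rfl, hx1, hx2, hy1, hy2, ht⟩ |
        ⟨x, hAx, hx1, hx2, rfl, m, hm, htm⟩ |
        ⟨x, y, hAx, rfl, hx1, hx2, hy1, hy2, ⟨m, hm, htm⟩, m', p, hm', hp1, hp2, hmp, hpy⟩ |
        ⟨hAM, y, rfl, hy1, hy2, m, p, hm, hp1, hp2, hmp, hpy⟩
    · exact Or.inl g
    · -- state 2: A = {x}, B = {y}, TransGen x y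
      have hb' : b = y := hb
      subst hb'
      rcases mem_merge_block hC with rfl | ⟨z, hz1, hz2, rfl⟩
      · rcases (Set.mem_insert_iff.mp hc) with rfl | hc'
        · exact Or.inr (Or.inr (Or.inl ⟨x, hAx, hx1, hx2, rfl, c,
            Or.inl rfl, ht.tail hbc⟩))
        · have : c = v := hc'
          subst this
          exact Or.inr (Or.inr (Or.inl ⟨x, hAx, hx1, hx2, rfl, c,
            Or.inr rfl, ht.tail hbc⟩))
      · have hc' : c = z := hc
        subst hc'
        exact Or.inr (Or.inl ⟨x, c, hAx, rfl, hx1, hx2, hz1, hz2, ht.tail hbc⟩)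
    · -- state 3: A = {x}, B = {u,v}
      rcases mem_merge_block hC with rfl | ⟨z, hz1, hz2, rfl⟩
      · exact absurd rfl hne
      · have hc' : c = z := hc
        subst hc'
        have hb' : b = u ∨ b = v := by
          rcases (Set.mem_insert_iff.mp hb) with rfl | hb'
          · exact Or.inl rfl
          · exact Or.inr hb'
        exact Or.inr (Or.inr (Or.inr (Or.inl ⟨x, c, hAx, rfl, hx1, hx2, hz1, hz2,
          ⟨m, hm, htm⟩, b, c, hb', hz1, hz2, hbc, Relation.ReflTransGen.refl⟩)))
    · -- state 4
      have hb' : b = y := hb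
      subst hb'
      rcases mem_merge_block hC with rfl | ⟨z, hz1, hz2, rfl⟩
      · have hc' : c = u ∨ c = v := by
          rcases (Set.mem_insert_iff.mp hc) with rfl | hc'
          · exact Or.inl rfl
          · exact Or.inr hc'
        refine Or.inl (goal_of' hacyc hm' hc' hp1 hp2 (Relation.TransGen.single hmp) ?_)
        exact Relation.TransGen.tail' hpy hbc
      · have hc' : c = z := hc
        subst hc'
        exact Or.inr (Or.inr (Or.inr (Or.inl ⟨x, c, hAx, rfl, hx1, hx2, hz1, hz2,
          ⟨m, hm, htm⟩, m', p, hm', hp1, hp2, hmp, hpy.tail hbc⟩)))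
    · -- state 5: A = {u,v}, B = {y}
      have hb' : b = y := hb
      subst hb'
      rcases mem_merge_block hC with rfl | ⟨z, hz1, hz2, rfl⟩
      · have hc' : c = u ∨ c = v := by
          rcases (Set.mem_insert_iff.mp hc) with rfl | hc'
          · exact Or.inl rfl
          · exact Or.inr hc'
        refine Or.inl (goal_of' hacyc hm hc' hp1 hp2 (Relation.TransGen.single hmp) ?_)
        exact Relation.TransGen.tail' hpy hbc
      · have hc' : c = z := hc
        subst hc'
        exact Or.inr (Or.inr (Or.inr (Or.inr ⟨hAM, c, rfl, hz1, hz2, m, p, hm,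
          hp1, hp2, hmp, hpy.tail hbc⟩)))

lemma goal_of_cycle {E : V → V → Prop} {u v : V} (hacyc : Acyclic E)
    {A : Set V} (h : Relation.TransGen (QuotRel E (MergePartition u v)) A A) :
    Goal' E u v := by
  rcases inv_of_transGen hacyc h with g |
      ⟨x, y, hAx, hAy, hx1, hx2, hy1, hy2, ht⟩ |
      ⟨x, hAx, hx1, hx2, hAM, m, hm, htm⟩ |
      ⟨x, y, hAx, hAy, hx1, hx2, hy1, hy2, ⟨m, hm, htm⟩, m', p, hm', hp1, hp2, hmp, hpy⟩ |
      ⟨hAM, y, hAy, hy1, hy2, _⟩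
  · exact g
  · have hxy : x = y := Set.singleton_eq_singleton_iff.mp (hAx ▸ hAy)
    subst hxy
    exact absurd ht (hacyc x)
  · have : u ∈ A := hAM ▸ Set.mem_insert u {v}
    rw [hAx] at this
    exact absurd this.symm hx1
  · have hxy : x = y := Set.singleton_eq_singleton_iff.mp (hAx ▸ hAy)
    subst hxy
    refine goal_of' hacyc hm' hm hp1 hp2 (Relation.TransGen.single hmp) ?_
    exact Relation.TransGen.trans_right hpy htm
  · have : u ∈ A := hAM ▸ Set.mem_insert u {v}
    rw [hAy] at this
    exact absurd this.symm hy1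

/-- If merging u and v creates a cycle in the quotient graph, then some node p
distinct from u and v lies on a directed path from u through p to v, or from v
through p to u.  Consequently, if the topological stages of u and v differ by
exactly one, merging them cannot create a cycle. -/
theorem merge_cycle_intermediate_node [Fintype V] (E : V → V → Prop)
    (hacyc : Acyclic E) (ts : V → ℕ) (hts : IsTopStage E ts) (u v : V)
    (huv : u ≠ v) :
    ((∃ A : Set V, Relation.TransGen (QuotRel E (MergePartition u v)) A A) →
      ∃ p : V, p ≠ u ∧ p ≠ v ∧
        ((Relation.TransGen E u p ∧ Relation.TransGen E p v) ∨
         (Relation.TransGen E v p ∧ Relation.TransGen E p u))) ∧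
    (|(ts u : ℤ) - (ts v : ℤ)| = 1 →
      ∀ A : Set V, ¬ Relation.TransGen (QuotRel E (MergePartition u v)) A A) := by
  constructor
  · rintro ⟨A, h⟩
    exact goal_of_cycle hacyc h
  · intro habs A h
    obtain ⟨p, hp1, hp2, hcase⟩ := goal_of_cycle hacyc h
    have h1 : (ts u : ℤ) - ts v = 1 ∨ (ts u : ℤ) - ts v = -1 :=
      (abs_eq (by norm_num)).mp habs
    rcases hcase with ⟨hup, hpv⟩ | ⟨hvp, hpu⟩
    · have a1 := ts_lt_of_transGen hts hup
      have a2 := ts_lt_of_transGen hts hpv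
      omega
    · have a1 := ts_lt_of_transGen hts hvp
      have a2 := ts_lt_of_transGen hts hpu
      omega
end

section
/- For a downstream convolution with kernel size R₂ × C₂ and output tile of width 16 (as in the fused two-convolution loop nest), the total number of executions of the upstream reduction body is N·O₂·H₂·(W₂/16)·O₁·R₂·(15 + C₂), and this exceeds the non-fused count N·O₁·(H₂ + R₂ − 1)·(W₂ + C₂ − 1) whenever O₂ ≥ 2 or (R₂ ≥ 2 and H₂ ≥ 2), given all parameters are positive integers with 16 | W₂. -/
/-- In the fused two-convolution loop nest, the upstream reduction body is
executed N·O₂·H₂·(W₂/16)·O₁·R₂·(15 + C₂) times, which exceeds the non-fused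
count N·O₁·(H₂ + R₂ − 1)·(W₂ + C₂ − 1) whenever O₂ ≥ 2 or (R₂ ≥ 2 and H₂ ≥ 2). -/
theorem fused_conv_redundancy (N O₁ O₂ H₂ W₂ R₂ C₂ : ℕ)
    (hN : 0 < N) (hO₁ : 0 < O₁) (hO₂ : 0 < O₂) (hH₂ : 0 < H₂) (hW₂ : 0 < W₂)
    (hR₂ : 0 < R₂) (hC₂ : 0 < C₂) (hdvd : 16 ∣ W₂)
    (h : 2 ≤ O₂ ∨ (2 ≤ R₂ ∧ 2 ≤ H₂)) :
    N * O₁ * (H₂ + R₂ - 1) * (W₂ + C₂ - 1) <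
      N * O₂ * H₂ * (W₂ / 16) * O₁ * R₂ * (15 + C₂) := by
  obtain ⟨k, rfl⟩ := hdvd
  have hk : 0 < k := by omega
  rw [Nat.mul_div_cancel_left k (by norm_num)]
  obtain ⟨c, rfl⟩ : ∃ c, C₂ = c + 1 := ⟨C₂ - 1, by omega⟩
  obtain ⟨r, rfl⟩ : ∃ r, R₂ = r + 1 := ⟨R₂ - 1, by omega⟩
  have e1 : H₂ + (r + 1) - 1 = H₂ + r := by omega
  have e2 : 16 * k + (c + 1) - 1 = 16 * k + c := by omega
  rw [e1, e2]
  have hw : 16 * k + c ≤ k * (15 + (c + 1)) := by nlinarith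
  have key : H₂ + r < O₂ * H₂ * (r + 1) := by
    rcases h with h2 | ⟨hr, hh⟩
    · have h1 : r ≤ H₂ * r := Nat.le_mul_of_pos_left r hH₂
      have h2' : 2 * (H₂ * (r + 1)) ≤ O₂ * (H₂ * (r + 1)) :=
        Nat.mul_le_mul_right _ h2
      nlinarith
    · have hr' : 1 ≤ r := by omega
      have h1 : 2 * r ≤ H₂ * r := Nat.mul_le_mul_right r hh
      have h2' : 1 * (H₂ * (r + 1)) ≤ O₂ * (H₂ * (r + 1)) :=
        Nat.mul_le_mul_right _ hO₂
      nlinarith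
  calc N * O₁ * (H₂ + r) * (16 * k + c)
      ≤ N * O₁ * (H₂ + r) * (k * (15 + (c + 1))) := Nat.mul_le_mul_left _ hw
    _ < N * O₂ * H₂ * k * O₁ * (r + 1) * (15 + (c + 1)) := by
        have hpos : 0 < N * O₁ * (k * (15 + (c + 1))) := by positivity
        have e3 : N * O₁ * (H₂ + r) * (k * (15 + (c + 1))) =
            (H₂ + r) * (N * O₁ * (k * (15 + (c + 1)))) := by ring
        have e4 : N * O₂ * H₂ * k * O₁ * (r + 1) * (15 + (c + 1)) =
            (O₂ * H₂ * (r + 1)) * (N * O₁ * (k * (15 + (c + 1)))) := by ring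
        rw [e3, e4]
        exact (Nat.mul_lt_mul_right hpos).2 key
end
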